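/- Assume in addition that ℓ is bounded, i.e., sup ℓ < +∞. Then for every v ∈ C_0(ℝ^d) and every integer N ≥ 2: M_∞(v) ≤ M_N(v) ≤ M_∞(v) + (1/N)(sup ℓ + sup v₊), where v₊ = max(v,0). -/

import Mathlib

open MeasureTheory ENNReal Filter Topology
open scoped ZeroAtInfty

noncomputable section

/-- The pairwise interaction cost `c_N` on `(ℝ^d)^N`. -/
def pairCost (d : ℕ) (ℓ : ℝ → ℝ≥0∞) (N : ℕ)
    (x : Fin N → EuclideanSpace ℝ (Fin d)) : ℝ≥0∞ :=
  (2 / ((N : ℝ≥0∞) * ((N : ℝ≥0∞) - 1))) *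
    ∑ i : Fin N, ∑ j : Fin N, if i < j then ℓ (dist (x i) (x j)) else 0

/-- The set `Π_N(ρ)` of multimarginal transport plans. -/
def couplings (d : ℕ) (N : ℕ) (ρ : Measure (EuclideanSpace ℝ (Fin d))) :
    Set (Measure (Fin N → EuclideanSpace ℝ (Fin d))) :=
  {P | IsProbabilityMeasure P ∧ ∀ i : Fin N, P.map (fun x => x i) = ρ}

/-- The multimarginal optimal transport cost `C_N(ρ)`. -/
def CN (d : ℕ) (ℓ : ℝ → ℝ≥0∞) (N : ℕ) (ρ : Measure (EuclideanSpace ℝ (Fin d))) : ℝ≥0∞ :=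
  ⨅ P ∈ couplings d N ρ, ∫⁻ x, pairCost d ℓ N x ∂P

/-- `S_N v (x) = (1/N) ∑ v(x_j)`. -/
def SN (d : ℕ) (N : ℕ) (v : EuclideanSpace ℝ (Fin d) → ℝ)
    (x : Fin N → EuclideanSpace ℝ (Fin d)) : ℝ :=
  (∑ i, v (x i)) / N

/-- The dual functional `M_N(v) = sup_x (S_N v (x) - c_N(x))`, as an extended real. -/
def MN (d : ℕ) (ℓ : ℝ → ℝ≥0∞) (N : ℕ) (v : EuclideanSpace ℝ (Fin d) → ℝ) : EReal :=
  ⨆ x : Fin N → EuclideanSpace ℝ (Fin d),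
    ((SN d N v x : ℝ) : EReal) - ((pairCost d ℓ N x : ℝ≥0∞) : EReal)

/-- `M_∞(v) = inf_{N ≥ 2} M_N(v)`. -/
def Minf (d : ℕ) (ℓ : ℝ → ℝ≥0∞) (v : EuclideanSpace ℝ (Fin d) → ℝ) : EReal :=
  ⨅ N : ℕ, ⨅ _ : 2 ≤ N, MN d ℓ N v

/-- The relaxed multimarginal cost `overline{C_N}`, defined by biconjugation. -/
def relCN (d : ℕ) (ℓ : ℝ → ℝ≥0∞) (N : ℕ)
    (ρ : Measure (EuclideanSpace ℝ (Fin d))) : EReal :=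
  ⨆ v : C₀(EuclideanSpace ℝ (Fin d), ℝ),
    ((∫ x, v x ∂ρ : ℝ) : EReal) - MN d ℓ N (fun x => v x)

/-- The limit functional `C_∞`, Fenchel conjugate of `M_∞`. -/
def Cinf (d : ℕ) (ℓ : ℝ → ℝ≥0∞) (ρ : Measure (EuclideanSpace ℝ (Fin d))) : EReal :=
  ⨆ v : C₀(EuclideanSpace ℝ (Fin d), ℝ),
    ((∫ x, v x ∂ρ : ℝ) : EReal) - Minf d ℓ (fun x => v x)

/-- The direct interaction energy `D(ρ) = ∬ ℓ(|x-y|) dρ dρ`. -/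
def Denergy (d : ℕ) (ℓ : ℝ → ℝ≥0∞) (ρ : Measure (EuclideanSpace ℝ (Fin d))) : ℝ≥0∞ :=
  ∫⁻ p : EuclideanSpace ℝ (Fin d) × EuclideanSpace ℝ (Fin d),
    ℓ (dist p.1 p.2) ∂(ρ.prod ρ)

/-- The convolution potential `u_ρ(x) = ∫ ℓ(|x-y|) dρ(y)`. -/
def uPot (d : ℕ) (ℓ : ℝ → ℝ≥0∞) (ρ : Measure (EuclideanSpace ℝ (Fin d)))
    (x : EuclideanSpace ℝ (Fin d)) : ℝ≥0∞ :=
  ∫⁻ y, ℓ (dist x y) ∂ρ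

/-- `n_ε(B)`: the maximal cardinality of an `ε`-separated subset of `B`. -/
def packNum (d : ℕ) (ε : ℝ) (B : Set (EuclideanSpace ℝ (Fin d))) : ℕ :=
  sSup {n : ℕ | ∃ s : Finset (EuclideanSpace ℝ (Fin d)), ↑s ⊆ B ∧ s.card = n ∧
    ∀ x ∈ s, ∀ y ∈ s, x ≠ y → ε ≤ dist x y}

/-- The cube `Q_a = [-a/2, a/2]^d`. -/
def cube (d : ℕ) (a : ℝ) : Set (EuclideanSpace ℝ (Fin d)) :=
  {x | ∀ i, |x i| ≤ a / 2}

/-- The packing constant `γ_d = inf_{k ≥ 1} S(Q_k)/k^d`. -/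
def gammaPack (d : ℕ) : ℝ :=
  ⨅ k : ℕ, (packNum d 1 (cube d ((k + 1 : ℕ) : ℝ)) : ℝ) / ((k + 1 : ℕ) : ℝ) ^ d

/-!
Deleting one of `n + 1` points and averaging over the deleted point leaves `S v - c` unchanged
(each pair survives `n - 1` of the `n + 1` deletions), so some deletion does not decrease it and
`M_N` is nonincreasing in `N`. Repeating a configuration of `N` points `k` times leaves `S_N v`
unchanged and raises the cost by at most `sup ℓ / N`: the only new pairs are two copies of one
point, costing `ℓ 0`. Hence `M_N ≤ M_{N' N} + sup ℓ / N ≤ M_{N'} + sup ℓ / N` for every `N' ≥ 2`.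
-/

section PairSum

variable {α : Type*} (f : α → α → ℝ)

def pairSum {N : ℕ} (x : Fin N → α) : ℝ :=
  ∑ i, ∑ j, if i < j then f (x i) (x j) else 0

def meanPairCost {N : ℕ} (x : Fin N → α) : ℝ :=
  2 / (N * (N - 1)) * pairSum f x

def dualValue (v : α → ℝ) {N : ℕ} (x : Fin N → α) : ℝ :=
  (∑ i, v (x i)) / N - meanPairCost f x

theorem Fin.sum_sum_comp_succAbove {M : Type*} [AddCommGroup M] {n : ℕ}
    (G : Fin (n + 1) → Fin (n + 1) → M) (m : Fin (n + 1)) :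
    ∑ i : Fin n, ∑ j : Fin n, G (m.succAbove i) (m.succAbove j) =
      ∑ i, ∑ j, G i j - ∑ j, G m j - ∑ i, G i m + G m m := by
  simp only [Fin.sum_univ_succAbove _ m, Finset.sum_add_distrib]
  abel

theorem sum_pairSum_comp_succAbove {n : ℕ} (x : Fin (n + 1) → α) :
    ∑ m : Fin (n + 1), pairSum f (x ∘ m.succAbove) = (n - 1) * pairSum f x := by
  set G : Fin (n + 1) → Fin (n + 1) → ℝ := fun i j => if i < j then f (x i) (x j) else 0
  have hremove : ∀ m,
      pairSum f (x ∘ m.succAbove) = pairSum f x - ∑ j, G m j - ∑ i, G i m := by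
    intro m
    simp only [pairSum, Function.comp_apply, ← Fin.succAbove_lt_succAbove_iff (p := m)]
    rw [Fin.sum_sum_comp_succAbove G m]
    simp [G]
  have hrow : ∑ m, ∑ j, G m j = pairSum f x := rfl
  have hcol : ∑ m, ∑ i, G i m = pairSum f x := Finset.sum_comm
  simp only [hremove, Finset.sum_sub_distrib, hrow, hcol, Finset.sum_const, Finset.card_univ,
    Fintype.card_fin, nsmul_eq_mul]
  push_cast; ring

theorem sum_meanPairCost_comp_succAbove {n : ℕ} (hn : 2 ≤ n) (x : Fin (n + 1) → α) :
    ∑ m : Fin (n + 1), meanPairCost f (x ∘ m.succAbove) = (n + 1) * meanPairCost f x := by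
  have hn' : (2 : ℝ) ≤ n := by exact_mod_cast hn
  have hn0 : (n : ℝ) ≠ 0 := by positivity
  have hn1 : (n : ℝ) - 1 ≠ 0 := by linarith
  simp only [meanPairCost, ← Finset.mul_sum, sum_pairSum_comp_succAbove]
  push_cast
  rw [add_sub_cancel_right]
  field_simp

theorem exists_dualValue_le_comp_succAbove {n : ℕ} (hn : 2 ≤ n) (v : α → ℝ)
    (x : Fin (n + 1) → α) :
    ∃ m : Fin (n + 1), dualValue f v x ≤ dualValue f v (x ∘ m.succAbove) := by
  have hn0 : (n : ℝ) ≠ 0 := by positivity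
  have hmean : ∀ m : Fin (n + 1),
      ∑ i : Fin n, v (x (m.succAbove i)) = ∑ i, v (x i) - v (x m) :=
    fun m => by linarith [Fin.sum_univ_succAbove (fun i => v (x i)) m]
  have hsum :
      ∑ m : Fin (n + 1), dualValue f v (x ∘ m.succAbove) = (n + 1) * dualValue f v x := by
    simp only [dualValue, Finset.sum_sub_distrib, sum_meanPairCost_comp_succAbove f hn,
      Function.comp_apply, hmean, ← Finset.sum_div, Finset.sum_const, Finset.card_univ,
      Fintype.card_fin, nsmul_eq_mul]
    push_cast
    field_simp
    ring
  obtain ⟨m, -, hm⟩ := Finset.exists_le_of_sum_le Finset.univ_nonempty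
    (show ∑ _m : Fin (n + 1), dualValue f v x ≤ ∑ m, dualValue f v (x ∘ m.succAbove) by
      simp [hsum])
  exact ⟨m, hm⟩

variable {f}

theorem sum_sum_eq_two_mul_pairSum_add (hf : ∀ a b, f a b = f b a) {N : ℕ} (x : Fin N → α) :
    ∑ i, ∑ j, f (x i) (x j) = 2 * pairSum f x + ∑ i, f (x i) (x i) := by
  have hsplit : ∀ i j, f (x i) (x j) = (if i < j then f (x i) (x j) else 0) +
      (if j < i then f (x j) (x i) else 0) + (if i = j then f (x i) (x j) else 0) := by
    intro i j
    rcases lt_trichotomy i j with h | rfl | h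
    · simp [h, h.ne, h.not_gt]
    · simp
    · simp [h, h.ne', h.not_gt, hf (x i)]
  rw [Finset.sum_congr rfl fun i _ => Finset.sum_congr rfl fun j _ => hsplit i j]
  simp only [Finset.sum_add_distrib, Finset.sum_ite_eq, Finset.mem_univ, if_true]
  rw [Finset.sum_comm (f := fun i j => if j < i then f (x j) (x i) else 0)]
  simp only [pairSum]; ring

theorem sum_comp_modNat {M : Type*} [AddCommMonoid M] {k N : ℕ} (g : Fin N → M) :
    ∑ p : Fin (k * N), g p.modNat = k • ∑ i, g i := by
  rw [Fintype.sum_equiv finProdFinEquiv.symm (fun p : Fin (k * N) => g p.modNat)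
    (fun q => g q.2) fun p => rfl, Fintype.sum_prod_type]
  simp

theorem pairSum_comp_modNat (hf : ∀ a b, f a b = f b a) (k : ℕ) {N : ℕ} (x : Fin N → α) :
    pairSum f (x ∘ Fin.modNat : Fin (k * N) → α) =
      k ^ 2 * pairSum f x + k * (k - 1) / 2 * ∑ i, f (x i) (x i) := by
  have hfull := sum_sum_eq_two_mul_pairSum_add hf (x ∘ Fin.modNat : Fin (k * N) → α)
  have hdouble : ∑ p : Fin (k * N), ∑ q : Fin (k * N), f (x p.modNat) (x q.modNat) =
      k • k • ∑ i, ∑ j, f (x i) (x j) := by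
    rw [Finset.sum_congr rfl fun p _ => sum_comp_modNat fun j => f (x p.modNat) (x j),
      ← Finset.smul_sum, sum_comp_modNat fun i => ∑ j, f (x i) (x j)]
  simp only [Function.comp_apply, hdouble, sum_comp_modNat fun i => f (x i) (x i),
    sum_sum_eq_two_mul_pairSum_add hf x, nsmul_eq_mul] at hfull
  linear_combination -hfull / 2

theorem meanPairCost_comp_modNat_le (hf0 : ∀ a b, 0 ≤ f a b) (hf : ∀ a b, f a b = f b a)
    {L : ℝ} (hL : ∀ a, f a a ≤ L) {k N : ℕ} (hk : 1 ≤ k) (hN : 2 ≤ N) (x : Fin N → α) :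
    meanPairCost f (x ∘ Fin.modNat : Fin (k * N) → α) ≤ meanPairCost f x + L / N := by
  set P := pairSum f x
  set D := ∑ i, f (x i) (x i)
  have hP : 0 ≤ P := Finset.sum_nonneg fun i _ => Finset.sum_nonneg fun j _ => by
    split_ifs
    exacts [hf0 _ _, le_rfl]
  have hD : D ≤ N * L := by
    simpa using Finset.sum_le_sum fun i (_ : i ∈ Finset.univ) => hL (x i)
  have hL0 : 0 ≤ L := (hf0 _ _).trans (hL (x ⟨0, by omega⟩))
  have hk' : (1 : ℝ) ≤ k := by exact_mod_cast hk
  have hN' : (2 : ℝ) ≤ N := by exact_mod_cast hN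
  have hkN : (2 : ℝ) ≤ k * N := by nlinarith
  have hpair : 2 / ((k : ℝ) * N * (k * N - 1)) * k ^ 2 ≤ 2 / ((N : ℝ) * (N - 1)) := by
    rw [div_mul_eq_mul_div, div_le_div_iff₀ (by nlinarith) (by nlinarith)]
    nlinarith
  have hdiag : 2 / ((k : ℝ) * N * (k * N - 1)) * (k * (k - 1) / 2) * D ≤ L / N := by
    rw [show 2 / ((k : ℝ) * N * (k * N - 1)) * (k * (k - 1) / 2) * D =
        (k - 1) * D / (N * (k * N - 1))
      by field_simp, div_le_div_iff₀ (by nlinarith) (by linarith)]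
    nlinarith [mul_le_mul_of_nonneg_left hD (by positivity : (0 : ℝ) ≤ (k - 1) * N),
      mul_nonneg (by positivity : (0 : ℝ) ≤ N * L) (by linarith : (0 : ℝ) ≤ N - 1)]
  calc meanPairCost f (x ∘ Fin.modNat : Fin (k * N) → α)
      = 2 / (k * N * (k * N - 1)) * k ^ 2 * P +
          2 / (k * N * (k * N - 1)) * (k * (k - 1) / 2) * D := by
        rw [meanPairCost, pairSum_comp_modNat hf]
        push_cast
        ring
    _ ≤ 2 / (N * (N - 1)) * P + L / N := add_le_add (by gcongr) hdiag

theorem dualValue_le_dualValue_comp_modNat_add (hf0 : ∀ a b, 0 ≤ f a b)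
    (hf : ∀ a b, f a b = f b a) {L : ℝ} (hL : ∀ a, f a a ≤ L) {k N : ℕ} (hk : 1 ≤ k)
    (hN : 2 ≤ N) (v : α → ℝ) (x : Fin N → α) :
    dualValue f v x ≤ dualValue f v (x ∘ Fin.modNat : Fin (k * N) → α) + L / N := by
  have hk0 : (k : ℝ) ≠ 0 := by positivity
  have hmean :
      (∑ p : Fin (k * N), v (x p.modNat)) / ((k * N : ℕ) : ℝ) = (∑ i, v (x i)) / N := by
    rw [sum_comp_modNat fun i => v (x i), nsmul_eq_mul, Nat.cast_mul, mul_div_mul_left _ _ hk0]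
  have hcost := meanPairCost_comp_modNat_le hf0 hf hL hk hN x
  simp only [dualValue, Function.comp_apply, hmean]
  linarith

end PairSum

section DualFunctional

variable {d : ℕ} {ℓ : ℝ → ℝ≥0∞}

theorem ne_top_of_biSup_ne_top (hbdd : (⨆ r ∈ Set.Ici (0 : ℝ), ℓ r) ≠ ⊤) {r : ℝ}
    (hr : 0 ≤ r) : ℓ r ≠ ⊤ :=
  ne_top_of_le_ne_top hbdd (le_biSup ℓ (Set.mem_Ici.2 hr))

def realKernel (ℓ : ℝ → ℝ≥0∞) {E : Type*} [Dist E] (a b : E) : ℝ :=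
  (ℓ (dist a b)).toReal

theorem pairCost_ne_top (hbdd : (⨆ r ∈ Set.Ici (0 : ℝ), ℓ r) ≠ ⊤) {N : ℕ} (hN : 2 ≤ N)
    (x : Fin N → EuclideanSpace ℝ (Fin d)) : pairCost d ℓ N x ≠ ⊤ := by
  have hN1 : (N : ℝ≥0∞) - 1 ≠ 0 := by
    rw [ne_eq, tsub_eq_zero_iff_le, not_le]
    exact_mod_cast hN
  refine ENNReal.mul_ne_top
    (ENNReal.div_ne_top ofNat_ne_top (mul_ne_zero (by simp; omega) hN1))
    (ENNReal.sum_ne_top.2 fun i _ => ENNReal.sum_ne_top.2 fun j _ => ?_)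
  split_ifs
  exacts [ne_top_of_biSup_ne_top hbdd dist_nonneg, zero_ne_top]

theorem toReal_pairCost (hbdd : (⨆ r ∈ Set.Ici (0 : ℝ), ℓ r) ≠ ⊤) {N : ℕ} (hN : 2 ≤ N)
    (x : Fin N → EuclideanSpace ℝ (Fin d)) :
    (pairCost d ℓ N x).toReal = meanPairCost (realKernel ℓ) x := by
  have hterm : ∀ i j, (if i < j then ℓ (dist (x i) (x j)) else 0) ≠ ⊤ := by
    intro i j
    split_ifs
    exacts [ne_top_of_biSup_ne_top hbdd dist_nonneg, zero_ne_top]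
  rw [pairCost, meanPairCost, pairSum, ENNReal.toReal_mul,
    ENNReal.toReal_sum fun i _ => ENNReal.sum_ne_top.2 fun j _ => hterm i j]
  congr 1
  · rw [ENNReal.toReal_div, ENNReal.toReal_mul,
      ENNReal.toReal_sub_of_le (by exact_mod_cast (by omega : 1 ≤ N)) (natCast_ne_top N)]
    simp
  · refine Finset.sum_congr rfl fun i _ => ?_
    rw [ENNReal.toReal_sum fun j _ => hterm i j]
    refine Finset.sum_congr rfl fun j _ => ?_
    split_ifs <;> simp [realKernel]

theorem MN_eq_iSup_dualValue (hbdd : (⨆ r ∈ Set.Ici (0 : ℝ), ℓ r) ≠ ⊤) {N : ℕ} (hN : 2 ≤ N)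
    (w : EuclideanSpace ℝ (Fin d) → ℝ) :
    MN d ℓ N w =
      ⨆ x : Fin N → EuclideanSpace ℝ (Fin d), ((dualValue (realKernel ℓ) w x : ℝ) : EReal) := by
  refine iSup_congr fun x => ?_
  rw [← EReal.coe_ennreal_toReal (pairCost_ne_top hbdd hN x), toReal_pairCost hbdd hN x,
    ← EReal.coe_sub]
  rfl

theorem MN_succ_le (hbdd : (⨆ r ∈ Set.Ici (0 : ℝ), ℓ r) ≠ ⊤) {n : ℕ} (hn : 2 ≤ n)
    (w : EuclideanSpace ℝ (Fin d) → ℝ) : MN d ℓ (n + 1) w ≤ MN d ℓ n w := by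
  rw [MN_eq_iSup_dualValue hbdd (by omega), MN_eq_iSup_dualValue hbdd hn]
  refine iSup_le fun x => ?_
  obtain ⟨m, hm⟩ := exists_dualValue_le_comp_succAbove (realKernel ℓ) hn w x
  exact le_iSup_of_le (x ∘ m.succAbove) (EReal.coe_le_coe hm)

theorem MN_le_of_le (hbdd : (⨆ r ∈ Set.Ici (0 : ℝ), ℓ r) ≠ ⊤) {M K : ℕ} (hM : 2 ≤ M)
    (hMK : M ≤ K) (w : EuclideanSpace ℝ (Fin d) → ℝ) : MN d ℓ K w ≤ MN d ℓ M w :=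
  antitoneOn_nat_Ici_of_succ_le (f := fun n => MN d ℓ n w) (fun _ hn => MN_succ_le hbdd hn w)
    hM (hM.trans hMK) hMK

theorem MN_le_MN_mul_add (hbdd : (⨆ r ∈ Set.Ici (0 : ℝ), ℓ r) ≠ ⊤) {k N : ℕ} (hk : 1 ≤ k)
    (hN : 2 ≤ N) (w : EuclideanSpace ℝ (Fin d) → ℝ) :
    MN d ℓ N w ≤ MN d ℓ (k * N) w + (((⨆ r ∈ Set.Ici (0 : ℝ), ℓ r).toReal / N : ℝ) : EReal) := by
  rw [MN_eq_iSup_dualValue hbdd hN,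
    MN_eq_iSup_dualValue hbdd (hN.trans (Nat.le_mul_of_pos_left N hk))]
  refine iSup_le fun x => ?_
  have hL : ∀ a : EuclideanSpace ℝ (Fin d),
      realKernel ℓ a a ≤ (⨆ r ∈ Set.Ici (0 : ℝ), ℓ r).toReal :=
    fun a => ENNReal.toReal_mono hbdd (le_biSup ℓ (Set.mem_Ici.2 dist_nonneg))
  have hrepl := dualValue_le_dualValue_comp_modNat_add (f := realKernel ℓ)
    (fun _ _ => ENNReal.toReal_nonneg) (fun a b => by simp only [realKernel, dist_comm])
    hL hk hN w x
  exact (EReal.coe_le_coe hrepl).trans_eq (EReal.coe_add _ _) |>.trans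
    (add_le_add (le_iSup_of_le _ le_rfl) le_rfl)

theorem MN_le_Minf_add (hbdd : (⨆ r ∈ Set.Ici (0 : ℝ), ℓ r) ≠ ⊤) {N : ℕ} (hN : 2 ≤ N)
    (w : EuclideanSpace ℝ (Fin d) → ℝ) :
    MN d ℓ N w ≤ Minf d ℓ w + (((⨆ r ∈ Set.Ici (0 : ℝ), ℓ r).toReal / N : ℝ) : EReal) := by
  set E : ℝ := (⨆ r ∈ Set.Ici (0 : ℝ), ℓ r).toReal / N
  rw [← EReal.sub_le_iff_le_add (.inl (EReal.coe_ne_bot E)) (.inl (EReal.coe_ne_top E))]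
  refine le_iInf₂ fun N' hN' => ?_
  rw [EReal.sub_le_iff_le_add (.inl (EReal.coe_ne_bot E)) (.inl (EReal.coe_ne_top E))]
  calc MN d ℓ N w ≤ MN d ℓ (N' * N) w + E := MN_le_MN_mul_add hbdd (by omega) hN w
    _ ≤ MN d ℓ N' w + E :=
      add_le_add (MN_le_of_le hbdd hN' (Nat.le_mul_of_pos_right N' (by omega)) w) le_rfl

end DualFunctional

theorem statement_12_general (d : ℕ) (ℓ : ℝ → ℝ≥0∞)
    (hbdd : (⨆ r ∈ Set.Ici (0 : ℝ), ℓ r) ≠ ⊤)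
    (v : C₀(EuclideanSpace ℝ (Fin d), ℝ)) (N : ℕ) (hN : 2 ≤ N) :
    Minf d ℓ (fun x => v x) ≤ MN d ℓ N (fun x => v x) ∧
    MN d ℓ N (fun x => v x) ≤ Minf d ℓ (fun x => v x) +
      (((1 / (N : ℝ)) * ((⨆ r ∈ Set.Ici (0 : ℝ), ℓ r).toReal +
        (⨆ x, max (v x) 0)) : ℝ) : EReal) := by
  refine ⟨iInf₂_le N hN, (MN_le_Minf_add hbdd hN _).trans (add_le_add le_rfl ?_)⟩
  have hv : 0 ≤ ⨆ x, max (v x) 0 := Real.iSup_nonneg fun x => le_max_right _ _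
  rw [one_div_mul_eq_div]
  gcongr
  linarith

/-- for bounded `ℓ`, `M_∞(v) ≤ M_N(v) ≤ M_∞(v) + (sup ℓ + sup v₊)/N`. -/
theorem statement_12 (d : ℕ) (hd : 1 ≤ d) (ℓ : ℝ → ℝ≥0∞)
    (hl_lsc : LowerSemicontinuousOn ℓ (Set.Ici 0))
    (hl0 : 0 < ℓ 0)
    (hl_decay : Filter.Tendsto ℓ Filter.atTop (nhds 0))
    (hbdd : (⨆ r ∈ Set.Ici (0 : ℝ), ℓ r) ≠ ⊤)
    (v : C₀(EuclideanSpace ℝ (Fin d), ℝ)) (N : ℕ) (hN : 2 ≤ N) :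
    Minf d ℓ (fun x => v x) ≤ MN d ℓ N (fun x => v x) ∧
    MN d ℓ N (fun x => v x) ≤ Minf d ℓ (fun x => v x) +
      (((1 / (N : ℝ)) * ((⨆ r ∈ Set.Ici (0 : ℝ), ℓ r).toReal +
        (⨆ x, max (v x) 0)) : ℝ) : EReal) :=
  statement_12_general d ℓ hbdd v N hN

end
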